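/- For n ≥ 3, the intersection of the fixed-point spaces of the n operators EM_{1,2}, EM_{2,3}, …, EM_{n−1,n}, EM_{n,1} on (ℝ³)^{⊗n}, i.e. ⋂_i {x : EM_{i,i+1 (mod n)} x = x}, equals span{v₁₂^{⊗n}, v₁₃^{⊗n}}. -/

import Mathlib

open Matrix

/-- The blocks `B₁, B₂, B₃` of `EM`. -/
noncomputable def Bblk : Fin 3 → Matrix (Fin 3) (Fin 3) ℝ :=
  ![(1 / 4 : ℝ) • !![3, 1, 1; 1, 3, -1; 1, -1, 3],
    (1 / 4 : ℝ) • !![1, 3, 0; 3, 1, 0; -1, 1, 0],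
    (1 / 4 : ℝ) • !![1, 0, 3; -1, 0, 1; 3, 0, 1]]

/-- `EM = diag(B₁, B₂, B₃)`, regarded as a linear map on `ℝ³ ⊗ ℝ³` via the identification of
`ℝ³ ⊗ ℝ³` with `ℝ⁹` sending `e_i ⊗ e_j` to `e_{3(i−1)+j}` (so the basis of `ℝ³ ⊗ ℝ³` is indexed
by pairs, and the entry at `((i,j),(k,l))` is `(B_i)_{j,l}` if `i = k` and `0` otherwise). -/
noncomputable def EM : Matrix (Fin 3 × Fin 3) (Fin 3 × Fin 3) ℝ :=
  fun p q => if p.1 = q.1 then Bblk p.1 p.2 q.2 else 0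

/-- `EM_{i,j}`: the operator on `(ℝ³)^{⊗n}` (with basis indexed by `Fin n → Fin 3`) acting as
`EM` on the `i`-th and `j`-th tensor factors (in that order) and as the identity elsewhere. -/
noncomputable def EMop (n : ℕ) (i j : Fin n) :
    Matrix (Fin n → Fin 3) (Fin n → Fin 3) ℝ :=
  fun x y => EM (x i, x j) (y i, y j) *
    ∏ k ∈ Finset.univ.filter fun k => k ≠ i ∧ k ≠ j, (if x k = y k then (1 : ℝ) else 0)

/-- The `n`-fold tensor power `v^{⊗n}` of a vector `v ∈ ℝ³`, as a vector of `(ℝ³)^{⊗n}`. -/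
def tpow (n : ℕ) (v : Fin 3 → ℝ) : (Fin n → Fin 3) → ℝ := fun x => ∏ k, v (x k)

def v12 : Fin 3 → ℝ := ![1, 1, 0]
def v13 : Fin 3 → ℝ := ![1, 0, 1]

/-!
The fixed-point equation of `EM_{i,j}` can be read fibrewise: with `y` fixed away from slot `j`,
the vector `b ↦ x (update y j b)` must be fixed by the block `B_{y i}`, whose fixed vectors are
`(a + b, a, b)`, `(a, a, 0)` and `(a, 0, a)`. This shows at once that `v₁₂^{⊗n}` and `v₁₃^{⊗n}`
are fixed. Conversely, let `z` be a common fixed point of the cyclic family vanishing at the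
constant words `1⋯1` and `2⋯2` (the letters `0, 1, 2` index `e₁, e₂, e₃`). It vanishes on every
word, by induction on the number of zeros: a zero cyclically preceded by a nonzero letter may be
overwritten by that letter, the all-zero word splits into two words with one zero less, and a
zero-free nonconstant word has a cyclically adjacent pair `12` or `21`, on which `z` vanishes.
Any common fixed point minus the right combination of the two tensor powers is such a `z`.
-/

open Function

lemma Bblk_zero_mulVec_eq_self_iff (w : Fin 3 → ℝ) : Bblk 0 *ᵥ w = w ↔ w 0 = w 1 + w 2 := by
  simp [funext_iff, Fin.forall_fin_succ, Bblk, dotProduct, Fin.sum_univ_three]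
  grind

lemma Bblk_one_mulVec_eq_self_iff (w : Fin 3 → ℝ) : Bblk 1 *ᵥ w = w ↔ w 0 = w 1 ∧ w 2 = 0 := by
  simp [funext_iff, Fin.forall_fin_succ, Bblk, dotProduct, Fin.sum_univ_three]
  grind

lemma Bblk_two_mulVec_eq_self_iff (w : Fin 3 → ℝ) : Bblk 2 *ᵥ w = w ↔ w 0 = w 2 ∧ w 1 = 0 := by
  simp [funext_iff, Fin.forall_fin_succ, Bblk, dotProduct, Fin.sum_univ_three]
  grind

lemma apply_eq_zero_of_Bblk_mulVec_eq_self {c d : Fin 3} {w : Fin 3 → ℝ} (hc : c ≠ 0) (hd : d ≠ 0)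
    (hcd : c ≠ d) (hw : Bblk c *ᵥ w = w) : w d = 0 := by
  fin_cases c <;> fin_cases d <;>
    simp_all [Bblk_one_mulVec_eq_self_iff, Bblk_two_mulVec_eq_self_iff]

lemma apply_zero_eq_of_Bblk_mulVec_eq_self {c : Fin 3} {w : Fin 3 → ℝ} (hc : c ≠ 0)
    (hw : Bblk c *ᵥ w = w) : w 0 = w c := by
  fin_cases c <;> simp_all [Bblk_one_mulVec_eq_self_iff, Bblk_two_mulVec_eq_self_iff]

lemma v12_eq_zero_or_Bblk_mulVec_eq_self (c : Fin 3) : v12 c = 0 ∨ Bblk c *ᵥ v12 = v12 := by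
  fin_cases c <;> simp [v12, Bblk_zero_mulVec_eq_self_iff, Bblk_one_mulVec_eq_self_iff]

lemma v13_eq_zero_or_Bblk_mulVec_eq_self (c : Fin 3) : v13 c = 0 ∨ Bblk c *ᵥ v13 = v13 := by
  fin_cases c <;> simp [v13, Bblk_zero_mulVec_eq_self_iff, Bblk_two_mulVec_eq_self_iff]

theorem Fin.exists_not_and_add_one {n : ℕ} [NeZero n] (p : Fin n → Prop) (h₁ : ∃ i, ¬ p i)
    (h₂ : ∃ i, p i) : ∃ i, ¬ p i ∧ p (i + 1) := by
  obtain ⟨a, ha⟩ := h₁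
  obtain ⟨b, hb⟩ := h₂
  by_contra! h
  obtain ⟨m, rfl⟩ : ∃ m, n = m + 1 := Nat.exists_eq_succ_of_ne_zero (NeZero.ne n)
  have key : ∀ k : Fin (m + 1), ¬ p (a + k) := by
    intro k
    induction k using Fin.induction with
    | zero => simpa using ha
    | succ k ih => simpa [← Fin.coeSucc_eq_succ, ← add_assoc] using h _ ih
  exact key (b - a) (by rwa [add_sub_cancel])

lemma Fin.ne_add_one {n : ℕ} (i : Fin (n + 2)) : i ≠ i + 1 :=
  (add_ne_left.2 Fin.zero_ne_one.symm).symm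

open Finset in
lemma card_filter_update_lt {ι α : Type*} [Fintype ι] [DecidableEq ι] [DecidableEq α]
    {y : ι → α} {j : ι} {a b : α} (hj : y j = a) (hb : b ≠ a) :
    #{k | update y j b k = a} < #{k | y k = a} := by
  have hfilter : ({k | update y j b k = a} : Finset ι) = ({k | y k = a} : Finset ι).erase j := by
    ext k
    rcases eq_or_ne k j with rfl | hkj <;> simp [*]
  rw [hfilter]
  exact Finset.card_erase_lt_of_mem (by simp [hj])

section EMop

variable {n : ℕ} {i j : Fin n}

lemma EMop_apply_update (hij : i ≠ j) (y : Fin n → Fin 3) (b : Fin 3) :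
    EMop n i j y (update y j b) = Bblk (y i) (y j) b := by
  simp only [EMop, EM, update_of_ne hij, update_self, if_true]
  rw [Finset.prod_eq_one fun k hk => ?_, mul_one]
  rw [update_of_ne (Finset.mem_filter.1 hk).2.2, if_pos rfl]

lemma EMop_apply_eq_zero {y z : Fin n → Fin 3}
    (hz : z ∉ Set.range (update y j)) : EMop n i j y z = 0 := by
  obtain ⟨k, hkj, hk⟩ : ∃ k ≠ j, y k ≠ z k := by
    by_contra! h
    exact hz ⟨z j, funext fun k => by
      rcases eq_or_ne k j with rfl | hkj
      · simp
      · simp [update_of_ne hkj, h k hkj]⟩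
  rcases eq_or_ne k i with rfl | hki
  · simp [EMop, EM, hk]
  · exact mul_eq_zero_of_right _ <|
      Finset.prod_eq_zero (i := k) (by simp [hki, hkj]) (by simp [hk])

lemma EMop_mulVec_apply (hij : i ≠ j) (x : (Fin n → Fin 3) → ℝ) (y : Fin n → Fin 3) :
    (EMop n i j *ᵥ x) y = (Bblk (y i) *ᵥ (x ∘ update y j)) (y j) := by
  rw [mulVec, mulVec, dotProduct, dotProduct, eq_comm]
  exact Fintype.sum_of_injective _ (update_injective y j) _ _
    (fun z hz => by simp [EMop_apply_eq_zero hz]) (fun b => by rw [EMop_apply_update hij]; rfl)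

lemma EMop_mulVec_eq_self_iff (hij : i ≠ j) (x : (Fin n → Fin 3) → ℝ) :
    EMop n i j *ᵥ x = x ↔ ∀ y, Bblk (y i) *ᵥ (x ∘ update y j) = x ∘ update y j := by
  constructor
  · intro h y
    funext c
    have h' := congrFun h (update y j c)
    have hidem : update (update y j c) j = update y j := funext fun _ => update_idem _ _ _
    rwa [EMop_mulVec_apply hij, update_of_ne hij, update_self, hidem] at h'
  · intro h
    funext y
    simpa [EMop_mulVec_apply hij] using congrFun (h y) (y j)

lemma tpow_comp_update (v : Fin 3 → ℝ) (y : Fin n → Fin 3) :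
    tpow n v ∘ update y j = (∏ k ∈ Finset.univ.erase j, v (y k)) • v := by
  funext b
  simp [tpow, apply_update (fun _ => v), Finset.prod_update_of_mem,
    Finset.sdiff_singleton_eq_erase, mul_comm]

lemma EMop_mulVec_tpow (hij : i ≠ j) {v : Fin 3 → ℝ}
    (hv : ∀ c, v c = 0 ∨ Bblk c *ᵥ v = v) : EMop n i j *ᵥ tpow n v = tpow n v := by
  refine (EMop_mulVec_eq_self_iff hij _).2 fun y => ?_
  rw [tpow_comp_update, mulVec_smul]
  rcases hv (y i) with h | h
  · rw [Finset.prod_eq_zero (Finset.mem_erase.2 ⟨hij, Finset.mem_univ i⟩) h, zero_smul, zero_smul]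
  · rw [h]

lemma tpow_const (v : Fin 3 → ℝ) (c : Fin 3) : tpow n v (fun _ => c) = v c ^ n := by
  simp [tpow]

variable {x : (Fin n → Fin 3) → ℝ}

lemma apply_eq_zero_of_EMop_mulVec_eq_self (hij : i ≠ j) (hx : EMop n i j *ᵥ x = x)
    {y : Fin n → Fin 3} (hi : y i ≠ 0) (hj : y j ≠ 0) (hne : y i ≠ y j) : x y = 0 := by
  simpa using apply_eq_zero_of_Bblk_mulVec_eq_self hi hj hne
    ((EMop_mulVec_eq_self_iff hij x).1 hx y)

lemma apply_eq_apply_update_of_EMop_mulVec_eq_self (hij : i ≠ j) (hx : EMop n i j *ᵥ x = x)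
    {y : Fin n → Fin 3} (hi : y i ≠ 0) (hj : y j = 0) : x y = x (update y j (y i)) := by
  have h := apply_zero_eq_of_Bblk_mulVec_eq_self hi ((EMop_mulVec_eq_self_iff hij x).1 hx y)
  rwa [Function.comp_apply, ← hj, update_eq_self] at h

lemma apply_eq_add_of_EMop_mulVec_eq_self (hij : i ≠ j) (hx : EMop n i j *ᵥ x = x)
    {y : Fin n → Fin 3} (hi : y i = 0) (hj : y j = 0) :
    x y = x (update y j 1) + x (update y j 2) := by
  have h := (EMop_mulVec_eq_self_iff hij x).1 hx y
  rw [hi, Bblk_zero_mulVec_eq_self_iff, Function.comp_apply, ← hj, update_eq_self] at h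
  exact h

lemma EMop_mulVec_eq_self_of_mem_span (hij : i ≠ j)
    (hx : x ∈ Submodule.span ℝ {tpow n v12, tpow n v13}) : EMop n i j *ᵥ x = x := by
  obtain ⟨a, b, rfl⟩ := Submodule.mem_span_pair.1 hx
  rw [mulVec_add, mulVec_smul, mulVec_smul, EMop_mulVec_tpow hij v12_eq_zero_or_Bblk_mulVec_eq_self,
    EMop_mulVec_tpow hij v13_eq_zero_or_Bblk_mulVec_eq_self]

end EMop

open Finset in
theorem eq_zero_of_forall_EMop_mulVec_eq_self {n : ℕ} {z : (Fin (n + 2) → Fin 3) → ℝ}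
    (hz : ∀ i, EMop (n + 2) i (i + 1) *ᵥ z = z) (h₁ : z (fun _ => 1) = 0)
    (h₂ : z (fun _ => 2) = 0) : z = 0 := by
  funext y
  induction hc : #{k | y k = 0} using Nat.strong_induction_on generalizing y with
  | _ c ih =>
  have descend {y' : Fin (n + 2) → Fin 3} (h : #{k | y' k = 0} < c) : z y' = 0 := ih _ h y' rfl
  by_cases hzero : ∃ k, y k = 0
  · by_cases hnz : ∃ k, y k ≠ 0
    · obtain ⟨i, hi, hi'⟩ := Fin.exists_not_and_add_one (y · = 0) hnz hzero
      rw [apply_eq_apply_update_of_EMop_mulVec_eq_self (Fin.ne_add_one i) (hz i) hi hi']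
      exact descend (hc ▸ card_filter_update_lt hi' hi)
    · push Not at hnz
      rw [apply_eq_add_of_EMop_mulVec_eq_self (Fin.ne_add_one 0) (hz 0) (hnz 0) (hnz 1),
        descend (hc ▸ card_filter_update_lt (hnz 1) one_ne_zero),
        descend (hc ▸ card_filter_update_lt (hnz 1) (by decide)), add_zero, Pi.zero_apply]
  · push Not at hzero
    by_cases hconst : ∃ k, y k ≠ y 0
    · obtain ⟨i, hi, hi'⟩ := Fin.exists_not_and_add_one (y · = y 0) hconst ⟨0, rfl⟩
      exact apply_eq_zero_of_EMop_mulVec_eq_self (Fin.ne_add_one i) (hz i) (hzero i) (hzero _)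
        (hi' ▸ hi)
    · push Not at hconst
      rw [funext hconst]
      match y 0, hzero 0 with
      | 1, _ => exact h₁
      | 2, _ => exact h₂

/-- for `n ≥ 3`, the intersection of the fixed-point spaces of the operators
`EM_{1,2}, EM_{2,3}, …, EM_{n−1,n}, EM_{n,1}` (cyclically, `EM_{i,i+1 (mod n)}` for each `i`)
on `(ℝ³)^{⊗n}` equals `span{v₁₂^{⊗n}, v₁₃^{⊗n}}`. -/
theorem stmt12 (n : ℕ) (hn : 3 ≤ n) :
    {x : (Fin n → Fin 3) → ℝ | ∀ i : Fin n, (EMop n i (i + ⟨1, by omega⟩)).mulVec x = x} =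
      ↑(Submodule.span ℝ {tpow n v12, tpow n v13}) := by
  obtain ⟨m, rfl⟩ : ∃ m, n = m + 1 + 2 := ⟨n - 3, by omega⟩
  have hone : (⟨1, by omega⟩ : Fin (m + 1 + 2)) = 1 := Fin.ext (by simp)
  simp only [hone]
  ext x
  refine ⟨fun hx => Submodule.mem_span_pair.2 ⟨x (fun _ => 1), x (fun _ => 2), ?_⟩,
    fun hx i => EMop_mulVec_eq_self_of_mem_span (Fin.ne_add_one i) hx⟩
  rw [eq_comm, ← sub_eq_zero]
  refine eq_zero_of_forall_EMop_mulVec_eq_self (fun i => ?_) ?_ ?_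
  · rw [mulVec_sub, hx i, EMop_mulVec_eq_self_of_mem_span (Fin.ne_add_one i)
      (Submodule.mem_span_pair.2 ⟨_, _, rfl⟩)]
  all_goals simp [tpow_const, v12, v13]
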